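/- arXiv:1203.5638 — 2 statements merged into one kernel-verified Lean document; each statement's English description precedes it below -/
import Mathlib

section
/- Let A and B be two n×n real positive semidefinite matrices. Then there exists an invertible n×n real matrix S such that both S A Sᵀ and S B Sᵀ are diagonal matrices. -/
/-!
Congruence by a suitable `S₀` turns `A + B` into an orthogonal projection `P`. Then
`A' = S₀ A S₀ᴴ` and `B' = P - A'` are positive semidefinite with `A' ≤ P`, which forces
`P A' = A'`. Every eigenvector of the Hermitian matrix `A' + P` is then fixed or killed by `P`,
hence is a common eigenvector of `A'` and `B'`; an orthonormal eigenbasis `U` of `A' + P`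
therefore diagonalizes both, and `S = Uᴴ S₀` is the required congruence.
-/

open Matrix
open scoped ComplexOrder

lemma Real.exists_ne_zero_isIdempotentElem_mul_mul {x : ℝ} (hx : 0 ≤ x) :
    ∃ e : ℝ, e ≠ 0 ∧ IsIdempotentElem (e * x * e) := by
  rcases hx.eq_or_lt with rfl | hx
  · exact ⟨1, one_ne_zero, by simp [IsIdempotentElem]⟩
  · refine ⟨(√x)⁻¹, by positivity, ?_⟩
    have : (√x)⁻¹ * x * (√x)⁻¹ = 1 := by
      field_simp
      exact (Real.sq_sqrt hx.le).symm
    rw [this]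
    exact IsIdempotentElem.one

namespace Matrix

variable {n 𝕜 : Type*} [Fintype n] [RCLike 𝕜] {A B P : Matrix n n 𝕜}

lemma PosSemidef.exists_isUnit_isIdempotentElem_mul_mul_conjTranspose [DecidableEq n]
    (hA : A.PosSemidef) :
    ∃ S : Matrix n n 𝕜, IsUnit S ∧ IsIdempotentElem (S * A * Sᴴ) := by
  choose e he_ne he using
    fun i => Real.exists_ne_zero_isIdempotentElem_mul_mul (hA.eigenvalues_nonneg i)
  have hdiag := hA.1.conjStarAlgAut_star_eigenvectorUnitary
  rw [Unitary.conjStarAlgAut_apply, Unitary.coe_star, star_star] at hdiag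
  set U := hA.1.eigenvectorUnitary
  set E : Matrix n n 𝕜 := diagonal fun i => (e i : 𝕜)
  have hE : Eᴴ = E := by simp [E, diagonal_conjTranspose]
  refine ⟨E * star U.1, ?_, ?_⟩
  · refine (isUnit_diagonal.mpr ?_).mul (Unitary.isUnit_coe (U := star U))
    exact Pi.isUnit_iff.mpr fun i => (RCLike.ofReal_ne_zero.mpr (he_ne i)).isUnit
  · have hEAE : E * star U.1 * A * (E * star U.1)ᴴ
        = diagonal fun i => ((e i * hA.1.eigenvalues i * e i : ℝ) : 𝕜) := calc
      _ = E * (star U.1 * A * U.1) * E := by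
        simp only [conjTranspose_mul, hE, star_eq_conjTranspose, conjTranspose_conjTranspose,
          mul_assoc]
      _ = _ := by
        rw [hdiag, diagonal_mul_diagonal, diagonal_mul_diagonal]
        simp
    rw [hEAE, IsIdempotentElem, diagonal_mul_diagonal]
    congr 1
    funext i
    rw [← RCLike.ofReal_mul, (he i).eq]

lemma PosSemidef.mulVec_eq_zero_of_add_mulVec_eq_zero (hA : A.PosSemidef) (hB : B.PosSemidef)
    {x : n → 𝕜} (h : (A + B) *ᵥ x = 0) : A *ᵥ x = 0 := by
  have hsum : star x ⬝ᵥ A *ᵥ x + star x ⬝ᵥ B *ᵥ x = 0 := by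
    rw [← dotProduct_add, ← add_mulVec, h, dotProduct_zero]
  rw [← hA.dotProduct_mulVec_zero_iff]
  exact ((add_eq_zero_iff_of_nonneg (hA.dotProduct_mulVec_nonneg x)
    (hB.dotProduct_mulVec_nonneg x)).mp hsum).1

lemma PosSemidef.add_mul_eq_self_of_isIdempotentElem_add (hA : A.PosSemidef)
    (hB : B.PosSemidef) (h : IsIdempotentElem (A + B)) : (A + B) * A = A := by
  have hAP : A * (A + B) = A := by
    refine ext_iff_mulVec.mpr fun x => ?_
    have hker : (A + B) *ᵥ (x - (A + B) *ᵥ x) = 0 := by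
      rw [mulVec_sub, mulVec_mulVec, h.eq, sub_self]
    have := hA.mulVec_eq_zero_of_add_mulVec_eq_zero hB hker
    rw [mulVec_sub, sub_eq_zero] at this
    rw [← mulVec_mulVec, this]
  simpa [conjTranspose_mul, hA.1.eq, (hA.add hB).1.eq] using congrArg (·ᴴ) hAP

lemma PosSemidef.mulVec_eq_zero_or_eq_self_of_add_mulVec_eq_smul (hA : A.PosSemidef)
    (hP : P.PosSemidef) (hPP : IsIdempotentElem P) (hPA : P * A = A) {v : n → 𝕜} {μ : 𝕜}
    (hv : (A + P) *ᵥ v = μ • v) : P *ᵥ v = 0 ∨ P *ᵥ v = v := by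
  by_cases hμ : μ = 0
  · rw [hμ, zero_smul, add_comm] at hv
    exact .inl (hP.mulVec_eq_zero_of_add_mulVec_eq_zero hA hv)
  · have hPM : P * (A + P) = A + P := by rw [mul_add, hPA, hPP.eq]
    have : μ • P *ᵥ v = μ • v := by
      rw [← mulVec_smul, ← hv, mulVec_mulVec, hPM]
    exact .inr (smul_right_injective _ hμ this)

lemma isDiag_star_mul_mul_of_mulVec_col_eq_smul [DecidableEq n] {U N : Matrix n n 𝕜}
    (hU : U ∈ unitaryGroup n 𝕜) (h : ∀ j, ∃ c : 𝕜, N *ᵥ U.col j = c • U.col j) :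
    (star U * N * U).IsDiag := by
  choose c hc using h
  have hNU : N * U = U * diagonal c := by
    ext i j
    rw [mul_diagonal]
    simpa [mulVec, dotProduct, mul_apply, mul_comm] using congrFun (hc j) i
  rw [mul_assoc, hNU, ← mul_assoc, (mem_unitaryGroup_iff').mp hU, one_mul]
  exact isDiag_diagonal c

lemma PosSemidef.exists_unitary_isDiag_of_isIdempotentElem_add [DecidableEq n]
    (hA : A.PosSemidef) (hB : B.PosSemidef) (h : IsIdempotentElem (A + B)) :
    ∃ U ∈ unitaryGroup n 𝕜, (star U * A * U).IsDiag ∧ (star U * B * U).IsDiag := by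
  set P := A + B with hP_def
  have hP : P.PosSemidef := hA.add hB
  have hM : (A + P).IsHermitian := (hA.add hP).1
  set U := hM.eigenvectorUnitary
  have hMv (j : n) : (A + P) *ᵥ U.1.col j = (hM.eigenvalues j : 𝕜) • U.1.col j := by
    rw [IsHermitian.eigenvectorUnitary_col_eq, hM.mulVec_eigenvectorBasis,
      RCLike.real_smul_eq_coe_smul (K := 𝕜)]
  have hPv (j : n) : ∃ c : 𝕜, P *ᵥ U.1.col j = c • U.1.col j := by
    rcases hA.mulVec_eq_zero_or_eq_self_of_add_mulVec_eq_smul hP h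
      (hA.add_mul_eq_self_of_isIdempotentElem_add hB h) (hMv j) with hPv | hPv
    · exact ⟨0, by rw [hPv, zero_smul]⟩
    · exact ⟨1, by rw [hPv, one_smul]⟩
  have hAv (j : n) : ∃ a : 𝕜, A *ᵥ U.1.col j = a • U.1.col j := by
    obtain ⟨c, hc⟩ := hPv j
    exact ⟨_ - c, by rw [show A = (A + P) - P by abel, sub_mulVec, hMv, hc, sub_smul]⟩
  have hBv (j : n) : ∃ b : 𝕜, B *ᵥ U.1.col j = b • U.1.col j := by
    obtain ⟨c, hc⟩ := hPv j
    obtain ⟨a, ha⟩ := hAv j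
    exact ⟨c - a, by rw [show B = P - A by rw [hP_def]; abel, sub_mulVec, hc, ha, sub_smul]⟩
  exact ⟨U, U.2, isDiag_star_mul_mul_of_mulVec_col_eq_smul U.2 hAv,
    isDiag_star_mul_mul_of_mulVec_col_eq_smul U.2 hBv⟩

theorem PosSemidef.exists_isUnit_isDiag_mul_mul_conjTranspose [DecidableEq n]
    (hA : A.PosSemidef) (hB : B.PosSemidef) :
    ∃ S : Matrix n n 𝕜, IsUnit S ∧ (S * A * Sᴴ).IsDiag ∧ (S * B * Sᴴ).IsDiag := by
  obtain ⟨S, hS, hP⟩ := (hA.add hB).exists_isUnit_isIdempotentElem_mul_mul_conjTranspose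
  rw [mul_add, add_mul] at hP
  obtain ⟨U, hU, hUA, hUB⟩ := (hA.mul_mul_conjTranspose_same S)
    |>.exists_unitary_isDiag_of_isIdempotentElem_add (hB.mul_mul_conjTranspose_same S) hP
  have hconj (X : Matrix n n 𝕜) :
      star U * S * X * (star U * S)ᴴ = star U * (S * X * Sᴴ) * U := by
    simp only [conjTranspose_mul, star_eq_conjTranspose, conjTranspose_conjTranspose, mul_assoc]
  have hUS : IsUnit (star U * S) :=
    (Unitary.isUnit_coe (U := ⟨star U, Unitary.star_mem hU⟩)).mul hS
  refine ⟨star U * S, hUS, ?_, ?_⟩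
  · rw [hconj]
    exact hUA
  · rw [hconj]
    exact hUB

end Matrix

/-- Two real positive semidefinite matrices can be simultaneously diagonalized
by congruence: there is an invertible `S` with `S * A * Sᵀ` and `S * B * Sᵀ` diagonal. -/
theorem simultaneous_diagonalization_by_congruence
    {n : ℕ} (A B : Matrix (Fin n) (Fin n) ℝ)
    (hA : A.PosSemidef) (hB : B.PosSemidef) :
    ∃ S : Matrix (Fin n) (Fin n) ℝ, IsUnit S ∧
      (S * A * Sᵀ).IsDiag ∧ (S * B * Sᵀ).IsDiag := by
  simpa only [conjTranspose_eq_transpose_of_trivial] using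
    hA.exists_isUnit_isDiag_mul_mul_conjTranspose hB
end

section
/- Let M be an n×n real symmetric matrix with M ⪯ L, where L = I − (R+I)⁻¹ and R is symmetric positive definite (so 0 ⪯ L ≺ I). Then I − M is invertible, and the matrix C = (I − M)⁻¹ − I satisfies: C ⪰ 0 if and only if M ⪰ 0, and C ⪯ R. -/
/-!
Matrix inversion is order-reversing on positive definite matrices, which follows from the two
Schur complements of the block matrix `[[B, 1], [1, A⁻¹]]`. With `A := 1 - M`, the hypothesis reads
`(R + 1)⁻¹ ⪯ A`, so `A` is positive definite and `A⁻¹ ⪯ R + 1`, i.e. `A⁻¹ - 1 ⪯ R`; likewise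
`1 ⪯ A⁻¹ ↔ A ⪯ 1`, i.e. `0 ⪯ A⁻¹ - 1 ↔ 0 ⪯ M`.
-/

open Matrix

namespace Matrix.PosDef

variable {n K : Type*} [Fintype n] [DecidableEq n]
  [Field K] [PartialOrder K] [StarRing K] [StarOrderedRing K]

theorem posSemidef_inv_sub_inv {A B : Matrix n n K} (hA : A.PosDef) (hB : B.PosDef)
    (hAB : (B - A).PosSemidef) : (A⁻¹ - B⁻¹).PosSemidef := by
  have hA' : A⁻¹.PosDef := hA.inv
  let := hA.isUnit.invertible
  let := hA'.isUnit.invertible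
  let := hB.isUnit.invertible
  have schur₁₁ := fromBlocks₁₁ (1 : Matrix n n K) A⁻¹ hB
  have schur₂₂ := fromBlocks₂₂ B (1 : Matrix n n K) hA'
  simp only [conjTranspose_one, mul_one, one_mul, inv_inv_of_invertible] at schur₁₁ schur₂₂
  exact schur₁₁.mp (schur₂₂.mpr hAB)

theorem inv_sub_one_posSemidef_iff {A : Matrix n n K} (hA : A.PosDef) :
    (A⁻¹ - 1).PosSemidef ↔ (1 - A).PosSemidef := by
  constructor
  · intro h
    have h' := posSemidef_inv_sub_inv PosDef.one hA.inv (by simpa using h)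
    rwa [inv_one, nonsing_inv_nonsing_inv _ ((isUnit_iff_isUnit_det _).mp hA.isUnit)] at h'
  · intro h
    simpa using posSemidef_inv_sub_inv hA PosDef.one h

end Matrix.PosDef

theorem gaussian_covariance_from_mmse_general
    {n : ℕ} (R M : Matrix (Fin n) (Fin n) ℝ)
    (hR : R.PosDef)
    (hML : ((1 - (R + 1)⁻¹) - M).PosSemidef) :
    IsUnit (1 - M) ∧
    (((1 - M)⁻¹ - 1).PosSemidef ↔ M.PosSemidef) ∧
    (R - ((1 - M)⁻¹ - 1)).PosSemidef := by
  have hR₁ : (R + 1).PosDef := hR.add_posSemidef PosSemidef.one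
  have hML' : ((1 - M) - (R + 1)⁻¹).PosSemidef := by rwa [sub_right_comm]
  have hA : (1 - M).PosDef := by
    simpa using PosDef.posSemidef_add hML' hR₁.inv
  refine ⟨hA.isUnit, ?_, ?_⟩
  · rw [hA.inv_sub_one_posSemidef_iff, sub_sub_cancel]
  · have := hR₁.inv.posSemidef_inv_sub_inv hA hML'
    rwa [nonsing_inv_nonsing_inv _ ((isUnit_iff_isUnit_det _).mp hR₁.isUnit),
      ← sub_sub_eq_add_sub] at this

/-- If `M` is symmetric with `M ⪯ L := I − (R+I)⁻¹` for a symmetric positive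
definite `R`, then `I − M` is invertible and `C := (I−M)⁻¹ − I` satisfies
`C ⪰ 0 ↔ M ⪰ 0` and `C ⪯ R`. -/
theorem gaussian_covariance_from_mmse
    {n : ℕ} (R M : Matrix (Fin n) (Fin n) ℝ)
    (hR : R.PosDef) (hM : M.IsHermitian)
    (hML : ((1 - (R + 1)⁻¹) - M).PosSemidef) :
    IsUnit (1 - M) ∧
    (((1 - M)⁻¹ - 1).PosSemidef ↔ M.PosSemidef) ∧
    (R - ((1 - M)⁻¹ - 1)).PosSemidef :=
  gaussian_covariance_from_mmse_general R M hR hML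
end
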